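/- Let q be an even prime power, K = F_{q^m}, and 1 ≤ n ≤ m. Let C ⊆ K^n be a K-linear MRD code of dimension k ≥ 1 (i.e. with minimum rank distance n − k + 1). Then C is not Euclidean self-orthogonal: C ⊄ C^{⊥_E}. -/

import Mathlib

/-!
In characteristic two, `⟨c, c⟩ = (∑ i, c i) ^ 2`, so a self-orthogonal code lies in the
hyperplane `∑ i, c i = 0`. A code of dimension `k` has a nonzero codeword vanishing on any
`k - 1` prescribed coordinates; on the remaining `n - k + 1` coordinates its entries sum to zero,
so they span an `F`-space of dimension at most `n - k`, below the MRD bound `n - k + 1`.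
-/

open Finset

noncomputable def euclDual {K : Type*} [Field K] (n : ℕ) (C : Submodule K (Fin n → K)) :
    Submodule K (Fin n → K) :=
  ⨅ c ∈ C, LinearMap.ker (∑ i : Fin n, (c i) • (LinearMap.proj i : (Fin n → K) →ₗ[K] K))

theorem mem_euclDual_iff {K : Type*} [Field K] {n : ℕ} {C : Submodule K (Fin n → K)}
    {x : Fin n → K} : x ∈ euclDual n C ↔ ∀ c ∈ C, ∑ i, c i * x i = 0 := by
  simp [euclDual, Submodule.mem_iInf]

theorem sum_eq_zero_of_le_euclDual {K : Type*} [Field K] [CharP K 2] {n : ℕ}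
    {C : Submodule K (Fin n → K)} (hC : C ≤ euclDual n C) {c : Fin n → K} (hc : c ∈ C) :
    ∑ i, c i = 0 := by
  have hcc : ∑ i, c i * c i = 0 := mem_euclDual_iff.mp (hC hc) c hc
  rwa [← CharTwo.sum_mul_self, mul_self_eq_zero] at hcc

theorem Submodule.exists_ne_zero_forall_eq_zero {K ι : Type*} [Field K]
    (C : Submodule K (ι → K)) [FiniteDimensional K C] (s : Finset ι)
    (hs : #s < Module.finrank K C) : ∃ c ∈ C, c ≠ 0 ∧ ∀ i ∈ s, c i = 0 := by
  let restrict : C →ₗ[K] (s → K) := (LinearMap.funLeft K K Subtype.val).comp C.subtype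
  have hker : LinearMap.ker restrict ≠ ⊥ :=
    restrict.ker_ne_bot_of_finrank_lt (by simpa using hs)
  obtain ⟨⟨c, hcC⟩, hc, hc0⟩ := Submodule.exists_mem_ne_zero_of_ne_bot hker
  exact ⟨c, hcC, fun h => hc0 (Subtype.ext h), fun i hi => congrFun hc ⟨i, hi⟩⟩

theorem finrank_span_range_le_of_sum_eq_zero {F K ι : Type*} [Field F] [Field K] [Algebra F K]
    [Fintype ι] [DecidableEq ι] {c : ι → K} (hsum : ∑ i, c i = 0) {u : Finset ι} {j : ι}
    (hj : j ∈ u) (hc : ∀ i ∉ u, c i = 0) :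
    Module.finrank F (Submodule.span F (Set.range c)) ≤ #u - 1 := by
  classical
  have hcj : c j = -∑ i ∈ u.erase j, c i := by
    rw [eq_neg_iff_add_eq_zero, add_sum_erase u c hj,
      sum_subset (subset_univ u) (fun i _ hi => hc i hi), hsum]
  have hrange : Set.range c ⊆ Submodule.span F (((u.erase j).image c : Finset K) : Set K) := by
    rintro _ ⟨i, rfl⟩
    by_cases hi : i ∈ u.erase j
    · exact Submodule.subset_span (mem_image_of_mem c hi)
    by_cases hij : i = j
    · rw [hij, hcj]
      exact neg_mem <| Submodule.sum_mem _ fun i hi =>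
        Submodule.subset_span (mem_image_of_mem c hi)
    · rw [hc i (by simpa [hij] using hi)]
      exact zero_mem _
  calc Module.finrank F (Submodule.span F (Set.range c))
      ≤ Module.finrank F (Submodule.span F (((u.erase j).image c : Finset K) : Set K)) :=
        Submodule.finrank_mono (Submodule.span_le.mpr hrange)
    _ ≤ #((u.erase j).image c) := finrank_span_finset_le_card _
    _ ≤ #(u.erase j) := card_image_le
    _ = #u - 1 := card_erase_of_mem hj

theorem stmt18_general (n k : ℕ) (hk : 1 ≤ k)
    (F : Type*) [Field F] [Fintype F] (hq : Even (Fintype.card F))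
    (K : Type*) [Field K] [Algebra F K]
    (C : Submodule K (Fin n → K)) (hdim : Module.finrank K C = k)
    (hMRD : (∀ c ∈ C, c ≠ 0 →
        n - k + 1 ≤ Module.finrank F (Submodule.span F (Set.range c))) ∧
      ∃ c ∈ C, c ≠ 0 ∧ Module.finrank F (Submodule.span F (Set.range c)) = n - k + 1) :
    ¬ C ≤ euclDual n C := by
  intro hC
  have : CharP F 2 := ringChar.eq_iff.mp <|
    FiniteField.even_card_iff_char_two.mpr (Nat.even_iff.mp hq)
  have : CharP K 2 := charP_of_injective_algebraMap (algebraMap F K).injective 2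
  have hkn : k ≤ n := by simpa [hdim] using Submodule.finrank_le C
  obtain ⟨s, -, hs⟩ := exists_subset_card_eq (s := (univ : Finset (Fin n))) (n := k - 1)
    (by rw [card_univ, Fintype.card_fin]; omega)
  have hsc : #sᶜ = n - k + 1 := by rw [card_compl, Fintype.card_fin, hs]; omega
  obtain ⟨c, hcC, hc0, hcs⟩ := C.exists_ne_zero_forall_eq_zero s (by omega)
  obtain ⟨j, hj⟩ : sᶜ.Nonempty := card_pos.mp (by omega)
  have hrank := finrank_span_range_le_of_sum_eq_zero (F := F)
    (sum_eq_zero_of_le_euclDual hC hcC) hj (fun i hi => hcs i (notMem_compl.mp hi))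
  have := hMRD.1 c hcC hc0
  omega

/-- for `q` even, `K = F_{q^m}`, `1 ≤ n ≤ m`, an `F_{q^m}`-linear MRD code
`C ⊆ K^n` of dimension `k ≥ 1` (minimum rank distance `n - k + 1`) is never Euclidean
self-orthogonal. -/
theorem stmt18 (m n k : ℕ) (hm : 1 ≤ m) (hn1 : 1 ≤ n) (hnm : n ≤ m) (hk : 1 ≤ k)
    (F : Type*) [Field F] [Fintype F] (hq : Even (Fintype.card F))
    (K : Type*) [Field K] [Fintype K] [Algebra F K]
    (hK : Fintype.card K = Fintype.card F ^ m)
    (C : Submodule K (Fin n → K)) (hdim : Module.finrank K C = k)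
    (hMRD : (∀ c ∈ C, c ≠ 0 →
        n - k + 1 ≤ Module.finrank F (Submodule.span F (Set.range c))) ∧
      ∃ c ∈ C, c ≠ 0 ∧ Module.finrank F (Submodule.span F (Set.range c)) = n - k + 1) :
    ¬ C ≤ euclDual n C :=
  stmt18_general n k hk F hq K C hdim hMRD
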